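/- For X = [[0, B₁],[B₁', C₁]] and Y = [[0, B₂],[B₂', C₂]] in W and ε ∈ {1,−1}, one has Ω̃(X, Ĵ^ε Y) = Tr(B₁'·B₂) + Tr(B₂'·B₁) + 2ε·Tr(C₁·C₂), where Ω̃(X, Y) := Tr(ρ·(X·Y − Y·X)). In particular the form (X,Y) ↦ Ω̃(X, Ĵ^ε Y) is symmetric on W. -/

import Mathlib

open Matrix

/-- The standard complex structure matrix `J = [[0, -Id_n],[Id_n, 0]]`. -/
noncomputable def Jmat (n : ℕ) : Matrix (Fin n ⊕ Fin n) (Fin n ⊕ Fin n) ℝ :=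
  Matrix.fromBlocks 0 (-1) 1 0

/-- The matrix `ρ = [[0,0],[0,J]]` with block sizes `k` and `2n`. -/
noncomputable def rhoMat (k n : ℕ) :
    Matrix (Fin k ⊕ (Fin n ⊕ Fin n)) (Fin k ⊕ (Fin n ⊕ Fin n)) ℝ :=
  Matrix.fromBlocks 0 0 0 (Jmat n)

/-- The map `Ĵ^ε : [[A,B],[B',C]] ↦ [[0, −B·J],[J·B', ε·(J·C − C·J)/2]]`. -/
noncomputable def Jhat (k n : ℕ) (ε : ℝ)
    (X : Matrix (Fin k ⊕ (Fin n ⊕ Fin n)) (Fin k ⊕ (Fin n ⊕ Fin n)) ℝ) :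
    Matrix (Fin k ⊕ (Fin n ⊕ Fin n)) (Fin k ⊕ (Fin n ⊕ Fin n)) ℝ :=
  Matrix.fromBlocks 0 (-(X.toBlocks₁₂ * Jmat n)) (Jmat n * X.toBlocks₂₁)
    ((ε / 2) • (Jmat n * X.toBlocks₂₂ - X.toBlocks₂₂ * Jmat n))

/-- The bilinear form `Ω̃(X,Y) = Tr(ρ·(XY − YX))`. -/
noncomputable def OmegaForm (k n : ℕ)
    (X Y : Matrix (Fin k ⊕ (Fin n ⊕ Fin n)) (Fin k ⊕ (Fin n ⊕ Fin n)) ℝ) : ℝ :=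
  Matrix.trace (rhoMat k n * (X * Y - Y * X))

/-! The weight `ρ` only sees the lower-right block of a commutator, so `Ω̃` of two matrices with
vanishing upper-left block is `Tr(J · (B₁'P + C₁Q − P'B₁ − QC₁))`. For `C` anticommuting with `J`
the `C`-block of `Ĵ^ε` is `−ε·CJ` and `JCJ = C`; with `J² = −1` and cyclicity of the trace every
term becomes one of the traces in the formula, whose right-hand side is symmetric since
`Tr(C₁C₂) = Tr(C₂C₁)`. -/

namespace Matrix

variable {l m R : Type*}

theorem fromBlocks_sub [Sub R] (A A' : Matrix l l R) (B B' : Matrix l m R)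
    (C C' : Matrix m l R) (D D' : Matrix m m R) :
    fromBlocks A B C D - fromBlocks A' B' C' D' =
      fromBlocks (A - A') (B - B') (C - C') (D - D') := by
  ext (i | i) (j | j) <;> rfl

variable [Fintype m]

theorem trace_fromBlocks [Fintype l] [AddCommMonoid R] (A : Matrix l l R) (B : Matrix l m R)
    (C : Matrix m l R) (D : Matrix m m R) : trace (fromBlocks A B C D) = trace A + trace D := by
  simp [trace, Fintype.sum_sum_type]

theorem trace_fromBlocks_zero_zero_zero_mul [Fintype l] [NonUnitalNonAssocSemiring R]
    (J : Matrix m m R) (M : Matrix (l ⊕ m) (l ⊕ m) R) :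
    trace (fromBlocks 0 0 0 J * M) = trace (J * M.toBlocks₂₂) := by
  conv_lhs => rw [← fromBlocks_toBlocks M]
  simp [fromBlocks_multiply, trace_fromBlocks]

theorem toBlocks₂₂_commutator_fromBlocks_zero [Fintype l] [NonUnitalNonAssocRing R]
    (B P : Matrix l m R) (B' P' : Matrix m l R) (C Q : Matrix m m R) :
    (fromBlocks 0 B B' C * fromBlocks 0 P P' Q -
        fromBlocks 0 P P' Q * fromBlocks 0 B B' C).toBlocks₂₂ =
      B' * P + C * Q - (P' * B + Q * C) := by
  simp [fromBlocks_multiply, fromBlocks_sub]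

section SquareNegOne

variable [DecidableEq m] [CommRing R] {J : Matrix m m R}

theorem trace_mul_mul_mul_of_mul_self_eq_neg_one [Fintype l] (hJ : J * J = -1)
    (A : Matrix m l R) (B : Matrix l m R) : trace (J * (A * (B * J))) = -trace (A * B) := by
  rw [← Matrix.mul_assoc A, trace_mul_cycle', ← Matrix.mul_assoc, hJ, neg_one_mul, trace_neg]

theorem trace_mul_mul_of_mul_self_eq_neg_one (hJ : J * J = -1) (M : Matrix m m R) :
    trace (J * (J * M)) = -trace M := by
  rw [← Matrix.mul_assoc, hJ, neg_one_mul, trace_neg]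

theorem mul_mul_mul_of_anticommute (hJ : J * J = -1) {C : Matrix m m R} (hC : C * J + J * C = 0)
    (D : Matrix m l R) : J * (C * (J * D)) = C * D := by
  rw [← Matrix.mul_assoc C, ← Matrix.mul_assoc, ← Matrix.mul_assoc, eq_neg_of_add_eq_zero_right hC,
    Matrix.neg_mul, Matrix.mul_assoc, hJ, Matrix.mul_neg, Matrix.mul_one, neg_neg]

end SquareNegOne

end Matrix

open Matrix

theorem Jmat_mul_self (n : ℕ) : Jmat n * Jmat n = -1 := by
  simp [Jmat, fromBlocks_multiply, ← fromBlocks_one, fromBlocks_neg]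

theorem Jhat_fromBlocks_zero (k n : ℕ) (ε : ℝ) (B : Matrix (Fin k) (Fin n ⊕ Fin n) ℝ)
    (B' : Matrix (Fin n ⊕ Fin n) (Fin k) ℝ) {C : Matrix (Fin n ⊕ Fin n) (Fin n ⊕ Fin n) ℝ}
    (hC : C * Jmat n + Jmat n * C = 0) :
    Jhat k n ε (fromBlocks 0 B B' C) =
      fromBlocks 0 (-(B * Jmat n)) (Jmat n * B') ((-ε) • (C * Jmat n)) := by
  rw [Jhat, toBlocks_fromBlocks₁₂, toBlocks_fromBlocks₂₁, toBlocks_fromBlocks₂₂,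
    eq_neg_of_add_eq_zero_right hC]
  congr 1
  module

theorem OmegaForm_fromBlocks_zero (k n : ℕ) (B P : Matrix (Fin k) (Fin n ⊕ Fin n) ℝ)
    (B' P' : Matrix (Fin n ⊕ Fin n) (Fin k) ℝ) (C Q : Matrix (Fin n ⊕ Fin n) (Fin n ⊕ Fin n) ℝ) :
    OmegaForm k n (fromBlocks 0 B B' C) (fromBlocks 0 P P' Q) =
      trace (Jmat n * (B' * P + C * Q - (P' * B + Q * C))) := by
  rw [OmegaForm, rhoMat, trace_fromBlocks_zero_zero_zero_mul,
    toBlocks₂₂_commutator_fromBlocks_zero]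

theorem OmegaForm_Jhat_fromBlocks_zero (k n : ℕ) (ε : ℝ)
    (B₁ B₂ : Matrix (Fin k) (Fin n ⊕ Fin n) ℝ) (B₁' B₂' : Matrix (Fin n ⊕ Fin n) (Fin k) ℝ)
    (C₁ : Matrix (Fin n ⊕ Fin n) (Fin n ⊕ Fin n) ℝ) {C₂ : Matrix (Fin n ⊕ Fin n) (Fin n ⊕ Fin n) ℝ}
    (hC₂ : C₂ * Jmat n + Jmat n * C₂ = 0) :
    OmegaForm k n (fromBlocks 0 B₁ B₁' C₁) (Jhat k n ε (fromBlocks 0 B₂ B₂' C₂)) =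
      trace (B₁' * B₂) + trace (B₂' * B₁) + 2 * ε * trace (C₁ * C₂) := by
  have hJ := Jmat_mul_self n
  rw [Jhat_fromBlocks_zero k n ε B₂ B₂' hC₂, OmegaForm_fromBlocks_zero]
  simp only [Matrix.mul_neg, Matrix.mul_smul, Matrix.smul_mul, Matrix.mul_add, Matrix.mul_sub,
    Matrix.mul_assoc, trace_add, trace_sub, trace_neg, trace_smul, smul_eq_mul,
    trace_mul_mul_mul_of_mul_self_eq_neg_one hJ, trace_mul_mul_of_mul_self_eq_neg_one hJ,
    mul_mul_mul_of_anticommute hJ hC₂, trace_mul_comm C₂ C₁]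
  ring

theorem metric_formula_and_symmetry_general (k n : ℕ)
    (ε : ℝ)
    (B₁ B₂ : Matrix (Fin k) (Fin n ⊕ Fin n) ℝ)
    (B₁' B₂' : Matrix (Fin n ⊕ Fin n) (Fin k) ℝ)
    (C₁ C₂ : Matrix (Fin n ⊕ Fin n) (Fin n ⊕ Fin n) ℝ)
    (hC₁ : C₁ * Jmat n + Jmat n * C₁ = 0) (hC₂ : C₂ * Jmat n + Jmat n * C₂ = 0) :
    OmegaForm k n (Matrix.fromBlocks 0 B₁ B₁' C₁)
        (Jhat k n ε (Matrix.fromBlocks 0 B₂ B₂' C₂)) =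
      Matrix.trace (B₁' * B₂) + Matrix.trace (B₂' * B₁) +
        2 * ε * Matrix.trace (C₁ * C₂) ∧
    OmegaForm k n (Matrix.fromBlocks 0 B₁ B₁' C₁)
        (Jhat k n ε (Matrix.fromBlocks 0 B₂ B₂' C₂)) =
      OmegaForm k n (Matrix.fromBlocks 0 B₂ B₂' C₂)
        (Jhat k n ε (Matrix.fromBlocks 0 B₁ B₁' C₁)) := by
  refine ⟨OmegaForm_Jhat_fromBlocks_zero k n ε B₁ B₂ B₁' B₂' C₁ hC₂, ?_⟩
  rw [OmegaForm_Jhat_fromBlocks_zero k n ε B₁ B₂ B₁' B₂' C₁ hC₂,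
    OmegaForm_Jhat_fromBlocks_zero k n ε B₂ B₁ B₂' B₁' C₂ hC₁, trace_mul_comm C₂ C₁]
  ring

theorem metric_formula_and_symmetry (k n : ℕ) (hk : 0 < k) (hn : 0 < n)
    (ε : ℝ) (hε : ε = 1 ∨ ε = -1)
    (B₁ B₂ : Matrix (Fin k) (Fin n ⊕ Fin n) ℝ)
    (B₁' B₂' : Matrix (Fin n ⊕ Fin n) (Fin k) ℝ)
    (C₁ C₂ : Matrix (Fin n ⊕ Fin n) (Fin n ⊕ Fin n) ℝ)
    (hC₁ : C₁ * Jmat n + Jmat n * C₁ = 0) (hC₂ : C₂ * Jmat n + Jmat n * C₂ = 0) :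
    OmegaForm k n (Matrix.fromBlocks 0 B₁ B₁' C₁)
        (Jhat k n ε (Matrix.fromBlocks 0 B₂ B₂' C₂)) =
      Matrix.trace (B₁' * B₂) + Matrix.trace (B₂' * B₁) +
        2 * ε * Matrix.trace (C₁ * C₂) ∧
    OmegaForm k n (Matrix.fromBlocks 0 B₁ B₁' C₁)
        (Jhat k n ε (Matrix.fromBlocks 0 B₂ B₂' C₂)) =
      OmegaForm k n (Matrix.fromBlocks 0 B₂ B₂' C₂)
        (Jhat k n ε (Matrix.fromBlocks 0 B₁ B₁' C₁)) :=
  metric_formula_and_symmetry_general k n ε B₁ B₂ B₁' B₂' C₁ C₂ hC₁ hC₂
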